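/- arXiv:1310.3746 — 4 statements merged into one kernel-verified Lean document; each statement's English description precedes it below -/
import Mathlib

section
/- Let G be a finite subgroup of SU(3) containing the matrices E and B such that every element of G is of the form P·D where P lies in the subgroup generated by E and B, and D is a diagonal matrix. Then there exist positive integers m, n with n dividing m, and an integer k with 0 ≤ k ≤ r−1 where r = m/n, satisfying both 1 + k + k² ≡ 0 (mod r) and 1 + 2k ≡ 0 (mod r), such that G is generated by the four matrices E, B, F = diag(ε, ε^k, ε^{−k−1}) and G₀ = diag(1, ε^{−r}, ε^{r}), where ε = exp(2πi/m). -/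
open Matrix Complex

noncomputable section

/-- The group `SU(3)`: 3×3 complex unitary matrices of determinant 1. -/
abbrev SU3 : Type := ↥(Matrix.specialUnitaryGroup (Fin 3) ℂ)

noncomputable instance : Group SU3 :=
  { (inferInstance : Monoid SU3) with
    inv := fun A => ⟨star A.val,
      ⟨Unitary.star_mem A.2.1, by
        have h2 : A.val.det = 1 := A.2.2
        show Matrix.detMonoidHom (star A.val) = 1
        show (star A.val).det = 1
        rw [Matrix.star_eq_conjTranspose, Matrix.det_conjTranspose, h2, star_one]⟩⟩
    inv_mul_cancel := fun A => Subtype.ext A.2.1.1 }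

/-- The matrix `E` with rows (0,1,0), (0,0,1), (1,0,0). -/
def EM : Matrix (Fin 3) (Fin 3) ℂ := !![0, 1, 0; 0, 0, 1; 1, 0, 0]

/-- The matrix `B` with rows (-1,0,0), (0,0,-1), (0,-1,0). -/
def BM : Matrix (Fin 3) (Fin 3) ℂ := !![-1, 0, 0; 0, 0, -1; 0, -1, 0]

/-- `ε = exp(2πi/m)`. -/
def eps (m : ℕ) : ℂ := Complex.exp (2 * Real.pi * Complex.I / m)

/-- The diagonal matrix `F = diag(ε, ε^k, ε^(-k-1))` with `ε = exp(2πi/m)`. -/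
def FM (m : ℕ) (k : ℤ) : Matrix (Fin 3) (Fin 3) ℂ :=
  Matrix.diagonal ![eps m, eps m ^ k, eps m ^ (-k - 1)]

/-- The diagonal matrix `G = diag(1, ε^(-r), ε^r)` with `ε = exp(2πi/m)`. -/
def GM (m r : ℕ) : Matrix (Fin 3) (Fin 3) ℂ :=
  Matrix.diagonal ![1, eps m ^ (-(r : ℤ)), eps m ^ (r : ℤ)]


/-!
A diagonal element of `𝒢` has order dividing the exponent `e` of `𝒢`, so it is
`diag(ζ^x, ζ^y, ζ^(-x-y))` with `ζ = exp(2πi/e)`; the exponents `(x, y)` that occur form a lattice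
`L ⊆ ℤ²` containing `(e, 0)`. Conjugation by `E` and `B` acts on `L` by `(x, y) ↦ (y, -x-y)` and
`(x, y) ↦ (x, -x-y)`. If `dℤ` is the projection of `L` to the first coordinate and `drℤ` its
intersection with the second axis, then `L` has the basis `(d, dk)`, `(0, -dr)` with `0 ≤ k < r`,
and applying the two symmetries to `(d, dk)` gives `r ∣ 1 + k + k²` and `r ∣ 1 + 2k`. For
`m = e / d` the two basis vectors are `F` and `G₀`, and the decomposition `g = P * D` shows that
`E, B, F, G₀` generate `𝒢`.
-/

open Real

lemma Matrix.diagonal_mem_unitaryGroup_iff {n : Type*} [Fintype n] [DecidableEq n] {v : n → ℂ} :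
    diagonal v ∈ unitaryGroup n ℂ ↔ ∀ i, ‖v i‖ = 1 := by
  rw [mem_unitaryGroup_iff', star_eq_conjTranspose, diagonal_conjTranspose, diagonal_mul_diagonal,
    ← diagonal_one, diagonal_eq_diagonal_iff]
  refine forall_congr' fun i => ?_
  rw [Pi.star_apply, RCLike.star_def, Complex.conj_mul']
  norm_cast
  exact pow_eq_one_iff_of_nonneg (norm_nonneg _) two_ne_zero

lemma Subgroup.closure_union_eq_of_forall_eq_mul {G : Type*} [Group G] {H : Subgroup G}
    {S T : Set G} (hS : S ⊆ H) (hT : T ⊆ H)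
    (h : ∀ g ∈ H, ∃ s ∈ closure S, ∃ t ∈ closure T, g = s * t) : closure (S ∪ T) = H := by
  refine le_antisymm ((closure_le H).2 (Set.union_subset hS hT)) fun g hg => ?_
  obtain ⟨s, hs, t, ht, rfl⟩ := h g hg
  exact mul_mem (closure_mono Set.subset_union_left hs) (closure_mono Set.subset_union_right ht)

lemma AddChar.map_zsmul_add_zsmul_mem_closure {A G : Type*} [AddGroup A] [Group G]
    (ψ : AddChar A G) (a b : ℤ) (u v : A) : ψ (a • u + b • v) ∈ Subgroup.closure {ψ u, ψ v} := by
  rw [map_add_eq_mul, map_zsmul_eq_zpow, map_zsmul_eq_zpow]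
  exact mul_mem (zpow_mem (Subgroup.subset_closure (by simp)) a)
    (zpow_mem (Subgroup.subset_closure (by simp)) b)

lemma coe_circleExp_two_pi_div (m : ℕ) : (Circle.exp (2 * π / m) : ℂ) = eps m := by
  rw [Circle.coe_exp, eps]
  push_cast
  ring_nf

lemma Circle.exp_two_pi_div_zpow_self {e : ℕ} (he : e ≠ 0) :
    Circle.exp (2 * π / e) ^ (e : ℤ) = 1 := by
  rw [← Circle.exp_zsmul, zsmul_eq_mul, Int.cast_natCast, mul_div_cancel₀ _ (by exact_mod_cast he),
    Circle.exp_two_pi]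

lemma Circle.exp_two_pi_div_mul_zpow {d : ℕ} (hd : d ≠ 0) (m : ℕ) :
    Circle.exp (2 * π / (d * m : ℕ)) ^ (d : ℤ) = Circle.exp (2 * π / m) := by
  rw [← Circle.exp_zsmul, zsmul_eq_mul, Int.cast_natCast, Nat.cast_mul]
  congr 1
  field_simp

lemma Circle.exists_zpow_exp_eq_of_pow_eq_one {n : ℕ} (hn : n ≠ 0) {a : Circle} (ha : a ^ n = 1) :
    ∃ x : ℤ, Circle.exp (2 * π / n) ^ x = a := by
  have := NeZero.mk hn
  obtain ⟨i, -, hi⟩ := (Complex.isPrimitiveRoot_exp n hn).eq_pow_of_pow_eq_one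
    (ξ := (a : ℂ)) (by exact_mod_cast congrArg ((↑) : Circle → ℂ) ha)
  refine ⟨i, Circle.ext ?_⟩
  rw [Circle.coe_zpow, coe_circleExp_two_pi_div, zpow_natCast, ← hi, eps]

lemma AddSubgroup.exists_nat_mem_iff_dvd (H : AddSubgroup ℤ) :
    ∃ d : ℕ, ∀ x, x ∈ H ↔ (d : ℤ) ∣ x := by
  obtain ⟨a, rfl⟩ := Int.subgroup_cyclic H
  exact ⟨a.natAbs, fun x => by
    rw [← AddSubgroup.zmultiples_eq_closure, Int.mem_zmultiples_iff, Int.natAbs_dvd]⟩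

lemma exists_hermite_basis_of_dvd (L : AddSubgroup (ℤ × ℤ)) {d r : ℕ} (hd : d ≠ 0) (hr : r ≠ 0)
    (hrot : ∀ p ∈ L, (p.2, -p.1 - p.2) ∈ L) (hrefl : ∀ p ∈ L, (p.1, -p.1 - p.2) ∈ L)
    (hdvd : ∀ p ∈ L, (d : ℤ) ∣ p.1) (hfst : ∃ c, ((d : ℤ), c) ∈ L)
    (hsnd : ∀ y, ((0 : ℤ), y) ∈ L ↔ (d * r : ℤ) ∣ y) :
    ∃ k : ℤ, 0 ≤ k ∧ k < r ∧ (r : ℤ) ∣ 1 + k + k ^ 2 ∧ (r : ℤ) ∣ 1 + 2 * k ∧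
      ((d : ℤ), d * k) ∈ L ∧
      ∀ p ∈ L, ∃ a b : ℤ, p = a • ((d : ℤ), d * k) + b • (0, -(d * r : ℤ)) := by
  have hv : ((0 : ℤ), -(d * r : ℤ)) ∈ L := (hsnd _).2 (dvd_neg.2 dvd_rfl)
  have hcancel (y : ℤ) (h : ((0 : ℤ), d * y) ∈ L) : (r : ℤ) ∣ y :=
    (mul_dvd_mul_iff_left (by exact_mod_cast hd)).1 ((hsnd _).1 h)
  obtain ⟨c, hc⟩ := hfst
  obtain ⟨k₀, rfl⟩ : (d : ℤ) ∣ c := hdvd _ (hrot _ hc)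
  set k := k₀ % r
  have hu : ((d : ℤ), d * k) ∈ L := by
    convert L.add_mem hc (L.zsmul_mem hv (k₀ / r)) using 1
    ext <;> simp [k, Int.emod_def]; ring
  refine ⟨k, Int.emod_nonneg _ (by exact_mod_cast hr), Int.emod_lt_of_pos _ (by omega), ?_, ?_, hu,
    fun p hp => ?_⟩
  · have h : ((0 : ℤ), d * -(1 + k + k ^ 2)) ∈ L := by
      convert L.sub_mem (hrot _ hu) (L.zsmul_mem hu k) using 1
      ext <;> simp <;> ring
    exact dvd_neg.1 (hcancel _ h)
  · have h : ((0 : ℤ), d * -(1 + 2 * k)) ∈ L := by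
      convert L.sub_mem (hrefl _ hu) hu using 1
      ext <;> simp; ring
    exact dvd_neg.1 (hcancel _ h)
  · obtain ⟨a, ha⟩ := hdvd p hp
    obtain ⟨b, hb⟩ := (hsnd (p.2 - a * (d * k))).1 (by
      convert L.sub_mem hp (L.zsmul_mem hu a) using 1
      ext <;> simp [ha]; ring)
    refine ⟨a, -b, ?_⟩
    ext
    · simp [ha, mul_comm]
    · simp; linear_combination hb

theorem exists_hermite_basis_of_rotate_mem (L : AddSubgroup (ℤ × ℤ)) {e : ℕ} (he : e ≠ 0)
    (heL : ((e : ℤ), 0) ∈ L)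
    (hrot : ∀ p ∈ L, (p.2, -p.1 - p.2) ∈ L) (hrefl : ∀ p ∈ L, (p.1, -p.1 - p.2) ∈ L) :
    ∃ d r : ℕ, d * r ∣ e ∧
      ∃ k : ℤ, 0 ≤ k ∧ k < r ∧ (r : ℤ) ∣ 1 + k + k ^ 2 ∧ (r : ℤ) ∣ 1 + 2 * k ∧
      ((d : ℤ), d * k) ∈ L ∧ ((0 : ℤ), -(d * r : ℤ)) ∈ L ∧
      ∀ p ∈ L, ∃ a b : ℤ, p = a • ((d : ℤ), d * k) + b • (0, -(d * r : ℤ)) := by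
  obtain ⟨d, hd⟩ := (L.map (AddMonoidHom.fst ℤ ℤ)).exists_nat_mem_iff_dvd
  obtain ⟨s, hs⟩ := (L.comap (AddMonoidHom.inr ℤ ℤ)).exists_nat_mem_iff_dvd
  simp only [AddSubgroup.mem_map, AddSubgroup.mem_comap, AddMonoidHom.coe_fst,
    AddMonoidHom.inr_apply] at hd hs
  have hdvd (p : ℤ × ℤ) (hp : p ∈ L) : (d : ℤ) ∣ p.1 := (hd _).1 ⟨p, hp, rfl⟩
  have hse : s ∣ e := by
    have : (s : ℤ) ∣ e := by simpa using (hs _).1 (hrot _ heL)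
    exact_mod_cast this
  obtain ⟨r, rfl⟩ : d ∣ s := by
    have : (d : ℤ) ∣ s := by simpa using hdvd _ (hrot _ ((hs s).2 dvd_rfl))
    exact_mod_cast this
  have hdr : d * r ≠ 0 := ne_zero_of_dvd_ne_zero he hse
  obtain ⟨⟨c₁, c⟩, hc, rfl⟩ := (hd d).2 dvd_rfl
  obtain ⟨k, hk0, hkr, hk1, hk2, hu, hspan⟩ := exists_hermite_basis_of_dvd L
    (left_ne_zero_of_mul hdr) (right_ne_zero_of_mul hdr) hrot hrefl hdvd ⟨c, hc⟩
    (by exact_mod_cast hs)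
  exact ⟨d, r, hse, k, hk0, hkr, hk1, hk2, hu, (hs _).2 (by simp), hspan⟩

namespace SU3

lemma EM_mul_diagonal_mul_star (a b c : ℂ) :
    EM * diagonal ![a, b, c] * star EM = diagonal ![b, c, a] := by
  ext i j
  fin_cases i <;> fin_cases j <;>
    simp [EM, mul_apply, Fin.sum_univ_three, star_eq_conjTranspose, vecMul, dotProduct]

lemma BM_mul_diagonal_mul_star (a b c : ℂ) :
    BM * diagonal ![a, b, c] * star BM = diagonal ![a, c, b] := by
  ext i j
  fin_cases i <;> fin_cases j <;>
    simp [BM, mul_apply, Fin.sum_univ_three, star_eq_conjTranspose, vecMul, dotProduct]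

def diagHom : Circle × Circle →* SU3 where
  toFun p := ⟨diagonal (fun i => (![p.1, p.2, (p.1 * p.2)⁻¹] i : ℂ)),
    mem_specialUnitaryGroup_iff.2 ⟨diagonal_mem_unitaryGroup_iff.2 fun _ => Circle.norm_coe _, by
      simp [det_diagonal, Fin.prod_univ_three, ← Circle.coe_mul]⟩⟩
  map_one' := by
    ext1
    show diagonal _ = 1
    rw [← diagonal_one]
    congr 1; funext i; fin_cases i <;> simp
  map_mul' p q := by
    ext1
    show diagonal _ = diagonal _ * diagonal _
    rw [diagonal_mul_diagonal]
    congr 1; funext i; fin_cases i <;> simp [mul_mul_mul_comm, mul_comm]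

lemma coe_diagHom (p : Circle × Circle) :
    (diagHom p : Matrix (Fin 3) (Fin 3) ℂ) = diagonal ![(p.1 : ℂ), p.2, ↑(p.1 * p.2)⁻¹] := by
  show diagonal _ = _
  congr 1; funext i; fin_cases i <;> rfl

lemma diagHom_injective : Function.Injective diagHom := by
  intro p q h
  have h := congrArg Subtype.val h
  simp only [coe_diagHom, diagonal_eq_diagonal_iff] at h
  exact Prod.ext (Circle.ext (h 0)) (Circle.ext (h 1))

lemma exists_diagHom_eq_of_isDiag {D : SU3} (hD : (D : Matrix (Fin 3) (Fin 3) ℂ).IsDiag) :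
    ∃ p, D = diagHom p := by
  set u := diag (D : Matrix (Fin 3) (Fin 3) ℂ)
  have hDu : (D : Matrix (Fin 3) (Fin 3) ℂ) = diagonal u := hD.diagonal_diag.symm
  have hnorm := diagonal_mem_unitaryGroup_iff.1 (hDu ▸ D.2.1)
  have hdet : u 0 * u 1 * u 2 = 1 := by
    simpa [hDu, det_diagonal, Fin.prod_univ_three] using D.2.2
  refine ⟨(⟨u 0, mem_sphere_zero_iff_norm.2 (hnorm 0)⟩,
    ⟨u 1, mem_sphere_zero_iff_norm.2 (hnorm 1)⟩), ?_⟩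
  ext1
  rw [hDu, coe_diagHom]
  congr 1; funext i; fin_cases i
  · rfl
  · rfl
  · exact eq_inv_of_mul_eq_one_right hdet

lemma conj_diagHom_of_coe_eq_EM {E : SU3} (hE : (E : Matrix (Fin 3) (Fin 3) ℂ) = EM)
    (a b : Circle) : E * diagHom (a, b) * E⁻¹ = diagHom (b, (a * b)⁻¹) := by
  ext1
  change E.val * _ * star E.val = _
  rw [hE, coe_diagHom, coe_diagHom, EM_mul_diagonal_mul_star]
  simp

lemma conj_diagHom_of_coe_eq_BM {B : SU3} (hB : (B : Matrix (Fin 3) (Fin 3) ℂ) = BM)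
    (a b : Circle) : B * diagHom (a, b) * B⁻¹ = diagHom (a, (a * b)⁻¹) := by
  ext1
  change B.val * _ * star B.val = _
  rw [hB, coe_diagHom, coe_diagHom, BM_mul_diagonal_mul_star]
  simp

def torus (ζ : Circle) : AddChar (ℤ × ℤ) SU3 where
  toFun p := diagHom (ζ ^ p.1, ζ ^ p.2)
  map_zero_eq_one' := map_one diagHom
  map_add_eq_mul' p q := by simp [_root_.zpow_add, ← map_mul]

lemma torus_apply (ζ : Circle) (p : ℤ × ℤ) : torus ζ p = diagHom (ζ ^ p.1, ζ ^ p.2) := rfl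

lemma coe_torus (ζ : Circle) (x y : ℤ) :
    (torus ζ (x, y) : Matrix (Fin 3) (Fin 3) ℂ) =
      diagonal ![(ζ : ℂ) ^ x, (ζ : ℂ) ^ y, (ζ : ℂ) ^ (-x - y)] := by
  rw [torus_apply, coe_diagHom]
  simp [zpow_sub₀, _root_.zpow_neg, div_eq_mul_inv, mul_comm]

lemma torus_zsmul (ζ : Circle) (d : ℤ) (p : ℤ × ℤ) : torus ζ (d • p) = torus (ζ ^ d) p := by
  simp [torus_apply, _root_.zpow_mul]

lemma conj_torus_of_coe_eq_EM {E : SU3} (hE : (E : Matrix (Fin 3) (Fin 3) ℂ) = EM)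
    (ζ : Circle) (x y : ℤ) : E * torus ζ (x, y) * E⁻¹ = torus ζ (y, -x - y) := by
  rw [torus_apply, conj_diagHom_of_coe_eq_EM hE, torus_apply]
  simp [_root_.zpow_sub, _root_.zpow_neg, mul_comm]

lemma conj_torus_of_coe_eq_BM {B : SU3} (hB : (B : Matrix (Fin 3) (Fin 3) ℂ) = BM)
    (ζ : Circle) (x y : ℤ) : B * torus ζ (x, y) * B⁻¹ = torus ζ (x, -x - y) := by
  rw [torus_apply, conj_diagHom_of_coe_eq_BM hB, torus_apply]
  simp [_root_.zpow_sub, _root_.zpow_neg, mul_comm]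

lemma exists_torus_eq_of_isDiag {e : ℕ} (he : e ≠ 0) {D : SU3}
    (hD : (D : Matrix (Fin 3) (Fin 3) ℂ).IsDiag) (hDe : D ^ e = 1) :
    ∃ p, D = torus (Circle.exp (2 * π / e)) p := by
  obtain ⟨⟨a, b⟩, rfl⟩ := exists_diagHom_eq_of_isDiag hD
  have hpow : (a, b) ^ e = 1 := diagHom_injective (by rw [map_pow, hDe, map_one])
  obtain ⟨x, rfl⟩ := Circle.exists_zpow_exp_eq_of_pow_eq_one he (congrArg Prod.fst hpow)
  obtain ⟨y, rfl⟩ := Circle.exists_zpow_exp_eq_of_pow_eq_one he (congrArg Prod.snd hpow)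
  exact ⟨(x, y), rfl⟩

lemma torus_exp_natCast_zero {e : ℕ} (he : e ≠ 0) :
    torus (Circle.exp (2 * π / e)) (e, 0) = 1 := by
  simp [torus_apply, Circle.exp_two_pi_div_zpow_self he, ← Prod.one_eq_mk]

lemma coe_torus_exp_eq_FM {d m e : ℕ} (hd : d ≠ 0) (hdm : d * m = e) (k : ℤ) :
    (torus (Circle.exp (2 * π / e)) (d, d * k) : Matrix (Fin 3) (Fin 3) ℂ) = FM m k := by
  subst hdm
  rw [show ((d : ℤ), (d : ℤ) * k) = (d : ℤ) • (1, k) by simp, torus_zsmul,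
    Circle.exp_two_pi_div_mul_zpow hd, coe_torus, coe_circleExp_two_pi_div, FM, zpow_one,
    neg_sub_comm]

lemma coe_torus_exp_eq_GM {d m e : ℕ} (hd : d ≠ 0) (hdm : d * m = e) (r : ℕ) :
    (torus (Circle.exp (2 * π / e)) (0, -(d * r)) : Matrix (Fin 3) (Fin 3) ℂ) = GM m r := by
  subst hdm
  rw [show ((0 : ℤ), -((d : ℤ) * r)) = (d : ℤ) • (0, -(r : ℤ)) by simp, torus_zsmul,
    Circle.exp_two_pi_div_mul_zpow hd, coe_torus, coe_circleExp_two_pi_div, GM]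
  simp

def torusLattice (𝒢 : Subgroup SU3) (ζ : Circle) : AddSubgroup (ℤ × ℤ) :=
  Subgroup.toAddSubgroup' (𝒢.comap (torus ζ).toMonoidHom)

lemma mem_torusLattice {𝒢 : Subgroup SU3} {ζ : Circle} {p : ℤ × ℤ} :
    p ∈ torusLattice 𝒢 ζ ↔ torus ζ p ∈ 𝒢 := Iff.rfl

lemma rotate_mem_torusLattice {𝒢 : Subgroup SU3} {E : SU3}
    (hE : (E : Matrix (Fin 3) (Fin 3) ℂ) = EM) (hEmem : E ∈ 𝒢) {ζ : Circle} {p : ℤ × ℤ}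
    (hp : p ∈ torusLattice 𝒢 ζ) : (p.2, -p.1 - p.2) ∈ torusLattice 𝒢 ζ := by
  rw [mem_torusLattice, ← conj_torus_of_coe_eq_EM hE]
  exact mul_mem (mul_mem hEmem hp) (inv_mem hEmem)

lemma reflect_mem_torusLattice {𝒢 : Subgroup SU3} {B : SU3}
    (hB : (B : Matrix (Fin 3) (Fin 3) ℂ) = BM) (hBmem : B ∈ 𝒢) {ζ : Circle} {p : ℤ × ℤ}
    (hp : p ∈ torusLattice 𝒢 ζ) : (p.1, -p.1 - p.2) ∈ torusLattice 𝒢 ζ := by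
  rw [mem_torusLattice, ← conj_torus_of_coe_eq_BM hB]
  exact mul_mem (mul_mem hBmem hp) (inv_mem hBmem)

lemma closure_insert_insert_torus_eq {𝒢 : Subgroup SU3} {E B : SU3} (hEmem : E ∈ 𝒢)
    (hBmem : B ∈ 𝒢)
    (hform : ∀ g ∈ 𝒢, ∃ P D : SU3, P ∈ Subgroup.closure ({E, B} : Set SU3) ∧
      (D : Matrix (Fin 3) (Fin 3) ℂ).IsDiag ∧ g = P * D)
    {ζ : Circle} (hdiag : ∀ D ∈ 𝒢, (D : Matrix (Fin 3) (Fin 3) ℂ).IsDiag → ∃ p, D = torus ζ p)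
    {u v : ℤ × ℤ} (hu : u ∈ torusLattice 𝒢 ζ) (hv : v ∈ torusLattice 𝒢 ζ)
    (hspan : ∀ p ∈ torusLattice 𝒢 ζ, ∃ a b : ℤ, p = a • u + b • v) :
    Subgroup.closure {E, B, torus ζ u, torus ζ v} = 𝒢 := by
  have hEB : ({E, B} : Set SU3) ⊆ 𝒢 := Set.pair_subset hEmem hBmem
  rw [Set.insert_eq E, Set.insert_eq B, ← Set.union_assoc, ← Set.insert_eq]
  refine Subgroup.closure_union_eq_of_forall_eq_mul hEB (Set.pair_subset hu hv) fun g hg => ?_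
  obtain ⟨P, D, hP, hD, rfl⟩ := hform g hg
  have hDmem : D ∈ 𝒢 := by simpa using mul_mem (inv_mem ((Subgroup.closure_le 𝒢).2 hEB hP)) hg
  obtain ⟨p, rfl⟩ := hdiag D hDmem hD
  obtain ⟨a, b, rfl⟩ := hspan p hDmem
  exact ⟨P, hP, _, (torus ζ).map_zsmul_add_zsmul_mem_closure a b u v, rfl⟩

end SU3

open SU3

theorem statement2 (𝒢 : Subgroup SU3) (hfin : Finite 𝒢)
    (E B : SU3) (hE : (E : Matrix (Fin 3) (Fin 3) ℂ) = EM) (hB : (B : Matrix (Fin 3) (Fin 3) ℂ) = BM)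
    (hEmem : E ∈ 𝒢) (hBmem : B ∈ 𝒢)
    (hform : ∀ g ∈ 𝒢, ∃ P D : SU3, P ∈ Subgroup.closure ({E, B} : Set SU3) ∧
      ((D : Matrix (Fin 3) (Fin 3) ℂ)).IsDiag ∧ g = P * D) :
    ∃ m n : ℕ, 0 < m ∧ 0 < n ∧ n ∣ m ∧
      ∃ k : ℤ, 0 ≤ k ∧ k ≤ ((m / n : ℕ) : ℤ) - 1 ∧
        ((m / n : ℕ) : ℤ) ∣ 1 + k + k ^ 2 ∧
        ((m / n : ℕ) : ℤ) ∣ 1 + 2 * k ∧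
        ∃ F G₀ : SU3,
          (F : Matrix (Fin 3) (Fin 3) ℂ) = FM m k ∧
          (G₀ : Matrix (Fin 3) (Fin 3) ℂ) = GM m (m / n) ∧
          Subgroup.closure {E, B, F, G₀} = 𝒢 := by
  obtain ⟨e, he, hexp⟩ : ∃ e ≠ 0, ∀ g ∈ 𝒢, g ^ e = 1 :=
    ⟨_, Monoid.exponent_ne_zero_of_finite, fun g hg => by
      simpa using congrArg Subtype.val (Monoid.pow_exponent_eq_one (⟨g, hg⟩ : 𝒢))⟩
  obtain ⟨d, r, ⟨n, hdrn⟩, k, hk0, hkr, hk1, hk2, hu, hv, hspan⟩ :=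
    exists_hermite_basis_of_rotate_mem (torusLattice 𝒢 (Circle.exp (2 * π / e))) he
      (by rw [mem_torusLattice, torus_exp_natCast_zero he]; exact one_mem 𝒢)
      (fun _ => rotate_mem_torusLattice hE hEmem) (fun _ => reflect_mem_torusLattice hB hBmem)
  obtain ⟨⟨hd, hr⟩, hn⟩ : (d ≠ 0 ∧ r ≠ 0) ∧ n ≠ 0 := by
    simpa only [hdrn, ne_eq, mul_eq_zero, not_or] using he
  have hdm : d * (r * n) = e := by rw [hdrn, mul_assoc]
  refine ⟨r * n, n, by positivity, by positivity, dvd_mul_left n r, k, ?_⟩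
  rw [Nat.mul_div_cancel r (Nat.pos_of_ne_zero hn)]
  exact ⟨hk0, by omega, hk1, hk2, _, _, coe_torus_exp_eq_FM hd hdm k, coe_torus_exp_eq_GM hd hdm r,
    closure_insert_insert_torus_eq hEmem hBmem hform
      (fun D hD hdiag => exists_torus_eq_of_isDiag he hdiag (hexp D hD)) hu hv hspan⟩

end
end

section
/- Let m, n be positive integers with n dividing m, set r = m/n and ε = exp(2πi/m), and let k be any integer. Then for F = diag(ε, ε^k, ε^{−k−1}) and G = diag(1, ε^{−r}, ε^{r}) in SU(3): F has order m, G has order n, the cyclic subgroups generated by F and by G intersect trivially, and the subgroup generated by F and G is isomorphic to ℤ_m × ℤ_n; in particular it has exactly m·n elements. -/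
/-!
Both matrices are diagonal with entries powers of the primitive `m`-th root of unity `ε`, so
`F ^ a * G ^ b = diag(ε ^ a, ε ^ (k a - r b), ε ^ (-(k + 1) a + r b))`, which is `1` exactly when
`m ∣ a` and `n ∣ b` (because `m = r n`). Hence `F` and `G` commute, have orders `m` and `n`, and
their cyclic subgroups meet trivially; a group generated by two such elements is the internal
direct product of the two cyclic groups.
-/

open Matrix Complex

noncomputable section

open Subgroup

section CyclicProduct

variable {H : Type*} [Group H]

lemma orderOf_eq_of_zpow_eq_one_iff {x : H} {m : ℕ}
    (h : ∀ a : ℤ, x ^ a = 1 ↔ (m : ℤ) ∣ a) : orderOf x = m :=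
  Nat.dvd_antisymm
    (Int.natCast_dvd_natCast.mp (orderOf_dvd_iff_zpow_eq_one.mpr ((h m).mpr dvd_rfl)))
    (Int.natCast_dvd_natCast.mp ((h _).mp (orderOf_dvd_iff_zpow_eq_one.mp dvd_rfl)))

lemma disjoint_zpowers_of_zpow_mul_zpow_eq_one {x y : H}
    (h : ∀ a b : ℤ, x ^ a * y ^ b = 1 → x ^ a = 1) : Disjoint (zpowers x) (zpowers y) := by
  rw [Subgroup.disjoint_def]
  rintro _ ⟨a, rfl⟩ ⟨b, hb : y ^ b = x ^ a⟩
  exact h a (-b) (by rw [← hb, _root_.zpow_neg, mul_inv_cancel])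

noncomputable def zmodOrderOfHom (x : H) : Multiplicative (ZMod (orderOf x)) →* H :=
  (zpowers x).subtype.comp
    (zmodMulEquivOfGenerator (g := (⟨x, mem_zpowers x⟩ : zpowers x))
      (fun ⟨_, k, hk⟩ => ⟨k, Subtype.ext hk⟩) (Nat.card_zpowers x)).toMonoidHom

lemma zmodOrderOfHom_injective (x : H) : Function.Injective (zmodOrderOfHom x) :=
  (zpowers x).subtype_injective.comp (MulEquiv.injective _)

lemma range_zmodOrderOfHom (x : H) : (zmodOrderOfHom x).range = zpowers x := by
  rw [zmodOrderOfHom, MonoidHom.range_comp, MonoidHom.range_eq_top.mpr (MulEquiv.surjective _),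
    ← MonoidHom.range_eq_map, range_subtype]

lemma closure_pair_eq_zpowers_sup_zpowers (x y : H) :
    closure ({x, y} : Set H) = zpowers x ⊔ zpowers y := by
  rw [Set.insert_eq, Subgroup.closure_union, zpowers_eq_closure, zpowers_eq_closure]

lemma Commute.of_mem_zpowers {x y a b : H} (hxy : Commute x y) (ha : a ∈ zpowers x)
    (hb : b ∈ zpowers y) : Commute a b := by
  obtain ⟨i, rfl⟩ := ha
  obtain ⟨j, rfl⟩ := hb
  exact hxy.zpow_zpow i j

noncomputable def closurePairMulEquiv {x y : H} (hxy : Commute x y)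
    (hdisj : Disjoint (zpowers x) (zpowers y)) :
    closure ({x, y} : Set H) ≃*
      Multiplicative (ZMod (orderOf x)) × Multiplicative (ZMod (orderOf y)) :=
  have comm (a b) : Commute (zmodOrderOfHom x a) (zmodOrderOfHom y b) :=
    hxy.of_mem_zpowers (Subtype.prop _) (Subtype.prop _)
  let φ := (zmodOrderOfHom x).noncommCoprod (zmodOrderOfHom y) comm
  have hφ : Function.Injective φ := (MonoidHom.noncommCoprod_injective _ _ comm).mpr
    ⟨zmodOrderOfHom_injective x, zmodOrderOfHom_injective y,
      by rwa [range_zmodOrderOfHom, range_zmodOrderOfHom]⟩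
  have hrange : φ.range = closure {x, y} := by
    rw [MonoidHom.noncommCoprod_range, range_zmodOrderOfHom, range_zmodOrderOfHom,
      closure_pair_eq_zpowers_sup_zpowers]
  ((MonoidHom.ofInjective hφ).trans (MulEquiv.subgroupCongr hrange)).symm

lemma card_closure_pair {x y : H} (hxy : Commute x y) (hdisj : Disjoint (zpowers x) (zpowers y)) :
    Nat.card (closure ({x, y} : Set H)) = orderOf x * orderOf y := by
  rw [Nat.card_congr (closurePairMulEquiv hxy hdisj).toEquiv, Nat.card_prod,
    Nat.card_congr Multiplicative.toAdd, Nat.card_congr Multiplicative.toAdd, Nat.card_zmod,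
    Nat.card_zmod]

end CyclicProduct

namespace SU3

lemma coe_inv (x : SU3) :
    ((x⁻¹ : SU3) : Matrix (Fin 3) (Fin 3) ℂ) = star (x : Matrix (Fin 3) (Fin 3) ℂ) :=
  rfl

variable {x y : SU3} {v w : Fin 3 → ℂ}

lemma star_mul_self_of_coe_eq_diagonal (hx : (x : Matrix (Fin 3) (Fin 3) ℂ) = diagonal v)
    (i : Fin 3) : star (v i) * v i = 1 := by
  have hunit : diagonal (fun i => star (v i) * v i) = 1 := by
    rw [← diagonal_mul_diagonal, ← Pi.star_def, ← diagonal_conjTranspose,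
      ← star_eq_conjTranspose, ← hx]
    exact x.2.1.1
  exact congrFun (diagonal_eq_one.mp hunit) i

lemma coe_zpow_of_coe_eq_diagonal (hx : (x : Matrix (Fin 3) (Fin 3) ℂ) = diagonal v) (a : ℤ) :
    ((x ^ a : SU3) : Matrix (Fin 3) (Fin 3) ℂ) = diagonal (fun i => v i ^ a) := by
  have hv i : v i ≠ 0 := right_ne_zero_of_mul_eq_one (star_mul_self_of_coe_eq_diagonal hx i)
  have hstar i : star (v i) = (v i)⁻¹ :=
    eq_inv_of_mul_eq_one_left (star_mul_self_of_coe_eq_diagonal hx i)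
  induction a using Int.induction_on with
  | zero => simp
  | succ a ih =>
    simp only [_root_.zpow_add_one, Submonoid.coe_mul, ih, hx, diagonal_mul_diagonal,
      zpow_add_one₀ (hv _)]
  | pred a ih =>
    simp only [_root_.zpow_sub_one, Submonoid.coe_mul, coe_inv, ih, hx, star_eq_conjTranspose,
      diagonal_conjTranspose, diagonal_mul_diagonal, Pi.star_apply, hstar, zpow_sub_one₀ (hv _)]

lemma commute_of_coe_eq_diagonal (hx : (x : Matrix (Fin 3) (Fin 3) ℂ) = diagonal v)
    (hy : (y : Matrix (Fin 3) (Fin 3) ℂ) = diagonal w) : Commute x y :=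
  Subtype.ext <| by
    simp only [Submonoid.coe_mul, hx, hy, diagonal_mul_diagonal, mul_comm (v _)]

lemma zpow_mul_zpow_eq_one_iff_of_coe_eq_diagonal {ζ : ℂ} {m : ℕ} (hm : m ≠ 0)
    (hζ : IsPrimitiveRoot ζ m)
    {f g : Fin 3 → ℤ} (hx : (x : Matrix (Fin 3) (Fin 3) ℂ) = diagonal (fun i => ζ ^ f i))
    (hy : (y : Matrix (Fin 3) (Fin 3) ℂ) = diagonal (fun i => ζ ^ g i)) (a b : ℤ) :
    x ^ a * y ^ b = 1 ↔ ∀ i, (m : ℤ) ∣ a * f i + b * g i := by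
  have hζ0 : ζ ≠ 0 := hζ.ne_zero hm
  rw [← Subtype.coe_inj, Submonoid.coe_mul, coe_zpow_of_coe_eq_diagonal hx,
    coe_zpow_of_coe_eq_diagonal hy, diagonal_mul_diagonal, OneMemClass.coe_one, diagonal_eq_one]
  simp only [funext_iff, Pi.one_apply, ← _root_.zpow_mul', ← zpow_add₀ hζ0,
    hζ.zpow_eq_one_iff_dvd]

end SU3

def FExp (k : ℤ) : Fin 3 → ℤ := ![1, k, -k - 1]

def GExp (r : ℕ) : Fin 3 → ℤ := ![0, -(r : ℤ), r]

lemma FM_eq_diagonal_eps_zpow (m : ℕ) (k : ℤ) :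
    FM m k = diagonal (fun i => eps m ^ FExp k i) := by
  rw [FM]
  congr 1
  funext i
  fin_cases i <;> simp [FExp]

lemma GM_eq_diagonal_eps_zpow (m r : ℕ) :
    GM m r = diagonal (fun i => eps m ^ GExp r i) := by
  rw [GM]
  congr 1
  funext i
  fin_cases i <;> simp [GExp]

lemma forall_dvd_FExp_GExp_iff {m n r : ℕ} (hr : r ≠ 0) (hmrn : m = r * n) (k a b : ℤ) :
    (∀ i, (m : ℤ) ∣ a * FExp k i + b * GExp r i) ↔ (m : ℤ) ∣ a ∧ (n : ℤ) ∣ b := by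
  have hrb : (m : ℤ) ∣ r * b ↔ (n : ℤ) ∣ b := by
    rw [hmrn, Nat.cast_mul, mul_dvd_mul_iff_left (by exact_mod_cast hr)]
  have hall {P : Fin 3 → Prop} : (∀ i, P i) ↔ P 0 ∧ P 1 ∧ P 2 :=
    ⟨fun h => ⟨h 0, h 1, h 2⟩, fun ⟨h0, h1, h2⟩ i => by fin_cases i <;> assumption⟩
  simp only [hall, FExp, GExp, Matrix.cons_val_zero, Matrix.cons_val_one, Matrix.cons_val_two,
    Matrix.vecHead, Matrix.vecTail, Function.comp_apply, Fin.succ_zero_eq_one, mul_one, zero_mul,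
    add_zero, neg_mul, ← sub_eq_add_neg, ← hrb, mul_comm b]
  constructor
  · rintro ⟨ha, -, h2⟩
    exact ⟨ha, (dvd_add_right (dvd_mul_of_dvd_left ha _)).mp h2⟩
  · rintro ⟨ha, hrb⟩
    exact ⟨ha, dvd_sub (dvd_mul_of_dvd_left ha _) hrb, dvd_add (dvd_mul_of_dvd_left ha _) hrb⟩

theorem statement4_general (m n : ℕ) (hm : 0 < m) (hnm : n ∣ m) (k : ℤ)
    (F G : SU3)
    (hF : (F : Matrix (Fin 3) (Fin 3) ℂ) = FM m k)
    (hG : (G : Matrix (Fin 3) (Fin 3) ℂ) = GM m (m / n)) :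
    orderOf F = m ∧ orderOf G = n ∧
    Subgroup.zpowers F ⊓ Subgroup.zpowers G = ⊥ ∧
    Nonempty ((Subgroup.closure ({F, G} : Set SU3)) ≃*
      Multiplicative (ZMod m) × Multiplicative (ZMod n)) ∧
    Nat.card (Subgroup.closure ({F, G} : Set SU3)) = m * n := by
  have hr : m / n ≠ 0 := (Nat.div_pos (Nat.le_of_dvd hm hnm) (Nat.pos_of_dvd_of_pos hnm hm)).ne'
  have hF' := hF.trans (FM_eq_diagonal_eps_zpow m k)
  have hG' := hG.trans (GM_eq_diagonal_eps_zpow m (m / n))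
  have key (a b : ℤ) : F ^ a * G ^ b = 1 ↔ (m : ℤ) ∣ a ∧ (n : ℤ) ∣ b := by
    rw [SU3.zpow_mul_zpow_eq_one_iff_of_coe_eq_diagonal hm.ne'
      (Complex.isPrimitiveRoot_exp m hm.ne') hF' hG',
      forall_dvd_FExp_GExp_iff hr (Nat.div_mul_cancel hnm).symm]
  have hordF : orderOf F = m := orderOf_eq_of_zpow_eq_one_iff fun a => by simpa using key a 0
  have hordG : orderOf G = n := orderOf_eq_of_zpow_eq_one_iff fun b => by simpa using key 0 b
  have hdisj : Disjoint (zpowers F) (zpowers G) := disjoint_zpowers_of_zpow_mul_zpow_eq_one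
    fun a b h => by simpa using (key a 0).mpr ⟨((key a b).mp h).1, dvd_zero _⟩
  have hcomm : Commute F G := SU3.commute_of_coe_eq_diagonal hF' hG'
  subst hordF hordG
  exact ⟨rfl, rfl, disjoint_iff.mp hdisj, ⟨closurePairMulEquiv hcomm hdisj⟩,
    card_closure_pair hcomm hdisj⟩

theorem statement4 (m n : ℕ) (hm : 0 < m) (hn : 0 < n) (hnm : n ∣ m) (k : ℤ)
    (F G : SU3)
    (hF : (F : Matrix (Fin 3) (Fin 3) ℂ) = FM m k)
    (hG : (G : Matrix (Fin 3) (Fin 3) ℂ) = GM m (m / n)) :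
    orderOf F = m ∧ orderOf G = n ∧
    Subgroup.zpowers F ⊓ Subgroup.zpowers G = ⊥ ∧
    Nonempty ((Subgroup.closure ({F, G} : Set SU3)) ≃*
      Multiplicative (ZMod m) × Multiplicative (ZMod n)) ∧
    Nat.card (Subgroup.closure ({F, G} : Set SU3)) = m * n :=
  statement4_general m n hm hnm k F G hF hG

end
end

section
/- Let m, n be positive integers with n dividing m, set r = m/n and ε = exp(2πi/m), let k be an integer, and let A be the subgroup of SU(3) generated by F = diag(ε, ε^k, ε^{−k−1}) and G = diag(1, ε^{−r}, ε^{r}). Then conjugation by E maps A into itself (E A E⁻¹ = A) if and only if 1 + k + k² ≡ 0 (mod r); and conjugation by B maps A into itself (B A B⁻¹ = A) if and only if 1 + 2k ≡ 0 (mod r). -/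
open Matrix Complex

noncomputable section

/-!
`F` and `G` are diagonal with entries `ζ ^ a, ζ ^ b, ζ ^ (-a - b)` for the unit complex number
`ζ = ε`, so `A` is the image of the lattice `{(a, b) | b ≡ k a [ZMOD r]}` of exponent pairs.
`E` and `B` permute the diagonal entries, so conjugation acts on exponent pairs by the linear maps
`(a, b) ↦ (b, -a - b)` and `(a, b) ↦ (a, -a - b)`; such a map preserves the lattice iff it sends
`(1, k)` into it, which is `r ∣ 1 + k + k ^ 2`, resp. `r ∣ 1 + 2 k`. Conversely, since `ε` has
order `m` and `r ∣ m`, already `E F E⁻¹ ∈ A` (resp. `B F B⁻¹ ∈ A`) forces that congruence.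
As `E` and `B` have finite order, mapping `A` into itself is the same as mapping it onto itself.
-/

theorem IsOfFinOrder.conj_image_eq_self_iff {G : Type*} [Group G] {g : G} (hg : IsOfFinOrder g)
    {S : Set G} : (fun x => g * x * g⁻¹) '' S = S ↔ ∀ x ∈ S, g * x * g⁻¹ ∈ S := by
  refine ⟨fun h x hx => h ▸ Set.mem_image_of_mem _ hx, fun hconj => ?_⟩
  let N : Submonoid G :=
    { carrier := {y | ∀ x ∈ S, y * x * y⁻¹ ∈ S}
      one_mem' := by simp
      mul_mem' := fun hy hz x hx => by simpa [mul_assoc] using hy _ (hz x hx) }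
  -- `g⁻¹` is a power of `g`, and the elements conjugating `S` into itself form a monoid.
  have hinv : g⁻¹ ∈ N := (Submonoid.powers_le (P := N)).2 hconj <|
    hg.mem_powers_iff_mem_zpowers.2 (inv_mem (Subgroup.mem_zpowers g))
  exact Subgroup.mem_normalizer_iff_conj_image_eq.1 <| Subgroup.mem_set_normalizer_iff.2 fun x =>
    ⟨hconj x, fun hx => by simpa [mul_assoc] using hinv _ hx⟩

lemma EM_mul_diagonal_mul_star (x y z : ℂ) :
    EM * diagonal ![x, y, z] * star EM = diagonal ![y, z, x] := by
  ext i j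
  fin_cases i <;> fin_cases j <;>
    simp [EM, Matrix.mul_apply, Matrix.diagonal, Matrix.vecHead, Matrix.vecTail]

lemma BM_mul_diagonal_mul_star (x y z : ℂ) :
    BM * diagonal ![x, y, z] * star BM = diagonal ![x, z, y] := by
  ext i j
  fin_cases i <;> fin_cases j <;>
    simp [BM, Matrix.mul_apply, Matrix.diagonal, Matrix.vecHead, Matrix.vecTail]

lemma EM_pow_three : EM ^ 3 = 1 := by
  simp [EM, pow_succ, Matrix.one_fin_three]

lemma BM_sq : BM ^ 2 = 1 := by
  simp [BM, pow_succ, Matrix.one_fin_three]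

def diagSU (ζ : Circle) (a b : ℤ) : SU3 :=
  ⟨diagonal ![((ζ ^ a : Circle) : ℂ), (ζ ^ b : Circle), (ζ ^ (-a - b) : Circle)], by
    refine Matrix.mem_specialUnitaryGroup_iff.2 ⟨Matrix.mem_unitaryGroup_iff.2 ?_, ?_⟩
    · rw [Matrix.star_eq_conjTranspose, diagonal_conjTranspose, diagonal_mul_diagonal,
        ← diagonal_one]
      have unit_mul_star (w : Circle) : (w : ℂ) * star (w : ℂ) = 1 := by
        rw [Complex.star_def, ← Circle.coe_inv_eq_conj, ← Circle.coe_mul, mul_inv_cancel,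
          Circle.coe_one]
      congr 1
      funext i
      fin_cases i <;> exact unit_mul_star _
    · simp [Fin.prod_univ_three, -Circle.coe_zpow, ← Circle.coe_mul, ← _root_.zpow_add]⟩

lemma coe_diagSU (ζ : Circle) (a b : ℤ) : (diagSU ζ a b : Matrix (Fin 3) (Fin 3) ℂ) =
    diagonal ![((ζ ^ a : Circle) : ℂ), (ζ ^ b : Circle), (ζ ^ (-a - b) : Circle)] := rfl

lemma diagSU_mul (ζ : Circle) (a b a' b' : ℤ) :
    diagSU ζ a b * diagSU ζ a' b' = diagSU ζ (a + a') (b + b') := by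
  apply Subtype.ext
  change (diagSU ζ a b : Matrix (Fin 3) (Fin 3) ℂ) * diagSU ζ a' b' = _
  rw [coe_diagSU, coe_diagSU, coe_diagSU, diagonal_mul_diagonal,
    show -(a + a') - (b + b') = (-a - b) + (-a' - b') by ring]
  congr 1
  funext i
  fin_cases i <;> simp [-Circle.coe_zpow, ← Circle.coe_mul, ← _root_.zpow_add]

def diagSUHom (ζ : Circle) : Multiplicative (ℤ × ℤ) →* SU3 :=
  MonoidHom.mk' (fun v => diagSU ζ v.toAdd.1 v.toAdd.2) fun _ _ => (diagSU_mul ζ _ _ _ _).symm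

theorem mem_closure_diagSU_iff {ζ : Circle} {k r : ℤ} {x : SU3} :
    x ∈ Subgroup.closure {diagSU ζ 1 k, diagSU ζ 0 (-r)} ↔
      ∃ a b, r ∣ b - k * a ∧ diagSU ζ a b = x := by
  have hgen : ({diagSU ζ 1 k, diagSU ζ 0 (-r)} : Set SU3) =
      diagSUHom ζ '' {Multiplicative.ofAdd (1, k), Multiplicative.ofAdd (0, -r)} := by
    rw [Set.image_pair]
    rfl
  rw [hgen, ← MonoidHom.map_closure, Subgroup.mem_map]
  simp only [Subgroup.mem_closure_pair]
  constructor
  · rintro ⟨_, ⟨s, t, rfl⟩, rfl⟩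
    refine ⟨s, k * s - r * t, ⟨-t, by ring⟩, ?_⟩
    simp only [diagSUHom, MonoidHom.mk'_apply, toAdd_mul, toAdd_zpow, toAdd_ofAdd, Prod.smul_mk,
      smul_eq_mul, Prod.mk_add_mk]
    congr 1 <;> ring
  · rintro ⟨a, b, ⟨c, hc⟩, rfl⟩
    refine ⟨_, ⟨a, -c, rfl⟩, ?_⟩
    simp only [diagSUHom, MonoidHom.mk'_apply, toAdd_mul, toAdd_zpow, toAdd_ofAdd, Prod.smul_mk,
      smul_eq_mul, Prod.mk_add_mk]
    congr 1 <;> linarith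

theorem IsPrimitiveRoot.dvd_sub_of_diagSU_eq {ζ : Circle} {m : ℕ} (hζ : IsPrimitiveRoot ζ m)
    {a b a' b' : ℤ} (h : diagSU ζ a b = diagSU ζ a' b') :
    (m : ℤ) ∣ a - a' ∧ (m : ℤ) ∣ b - b' := by
  have dvd_of_coe_eq {c c' : ℤ} (hc : ((ζ ^ c : Circle) : ℂ) = (ζ ^ c' : Circle)) :
      (m : ℤ) ∣ c - c' := by
    rw [← hζ.zpow_eq_one_iff_dvd, _root_.zpow_sub, Circle.coe_inj.1 hc, mul_inv_cancel]
  have entry (i : Fin 3) := congrArg (fun x : SU3 => (x : Matrix (Fin 3) (Fin 3) ℂ) i i) h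
  simp only [coe_diagSU, diagonal_apply_eq] at entry
  exact ⟨dvd_of_coe_eq (entry 0), dvd_of_coe_eq (entry 1)⟩

lemma conj_diagSU_of_coe_eq_EM {E : SU3} (hE : (E : Matrix (Fin 3) (Fin 3) ℂ) = EM)
    (ζ : Circle) (a b : ℤ) : E * diagSU ζ a b * E⁻¹ = diagSU ζ b (-a - b) := by
  apply Subtype.ext
  change E.1 * (diagSU ζ a b).1 * star E.1 = _
  rw [hE, coe_diagSU, coe_diagSU, EM_mul_diagonal_mul_star, show -b - (-a - b) = a by ring]

lemma conj_diagSU_of_coe_eq_BM {B : SU3} (hB : (B : Matrix (Fin 3) (Fin 3) ℂ) = BM)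
    (ζ : Circle) (a b : ℤ) : B * diagSU ζ a b * B⁻¹ = diagSU ζ a (-a - b) := by
  apply Subtype.ext
  change B.1 * (diagSU ζ a b).1 * star B.1 = _
  rw [hB, coe_diagSU, coe_diagSU, BM_mul_diagonal_mul_star, show -a - (-a - b) = b by ring]

lemma isOfFinOrder_of_coe_eq_EM {E : SU3} (hE : (E : Matrix (Fin 3) (Fin 3) ℂ) = EM) :
    IsOfFinOrder E :=
  isOfFinOrder_iff_pow_eq_one.2 ⟨3, by norm_num, Subtype.ext <| by
    change (E : Matrix (Fin 3) (Fin 3) ℂ) ^ 3 = 1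
    rw [hE, EM_pow_three]⟩

lemma isOfFinOrder_of_coe_eq_BM {B : SU3} (hB : (B : Matrix (Fin 3) (Fin 3) ℂ) = BM) :
    IsOfFinOrder B :=
  isOfFinOrder_iff_pow_eq_one.2 ⟨2, by norm_num, Subtype.ext <| by
    change (B : Matrix (Fin 3) (Fin 3) ℂ) ^ 2 = 1
    rw [hB, BM_sq]⟩

theorem conj_image_closure_diagSU_eq_iff {g : SU3} (hg : IsOfFinOrder g) {ζ : Circle} {m : ℕ}
    (hζ : IsPrimitiveRoot ζ m) {k r : ℤ} (hr : r ∣ m) (p q u v : ℤ)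
    (hconj : ∀ a b, g * diagSU ζ a b * g⁻¹ = diagSU ζ (p * a + q * b) (u * a + v * b)) :
    (fun x => g * x * g⁻¹) '' (Subgroup.closure {diagSU ζ 1 k, diagSU ζ 0 (-r)} : Set SU3) =
        Subgroup.closure {diagSU ζ 1 k, diagSU ζ 0 (-r)} ↔
      r ∣ u + v * k - k * (p + q * k) := by
  rw [hg.conj_image_eq_self_iff]
  simp only [SetLike.mem_coe, mem_closure_diagSU_iff]
  constructor
  · intro h
    obtain ⟨a, b, hab, heq⟩ := h _ ⟨1, k, by simp, rfl⟩
    rw [hconj] at heq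
    obtain ⟨h₁, h₂⟩ := hζ.dvd_sub_of_diagSU_eq heq.symm
    rw [show u + v * k - k * (p + q * k) =
      (u * 1 + v * k - b) + (b - k * a) - k * (p * 1 + q * k - a) by ring]
    exact ((hr.trans h₂).add hab).sub ((hr.trans h₁).mul_left k)
  · rintro hcond _ ⟨a, b, hab, rfl⟩
    refine ⟨_, _, ?_, (hconj a b).symm⟩
    rw [show u * a + v * b - k * (p * a + q * b) =
      (u + v * k - k * (p + q * k)) * a + (v - k * q) * (b - k * a) by ring]
    exact (hcond.mul_right a).add (hab.mul_left _)

def epsCircle (m : ℕ) : Circle := Circle.exp (2 * Real.pi / m)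

lemma coe_epsCircle (m : ℕ) : (epsCircle m : ℂ) = eps m := by
  rw [epsCircle, Circle.coe_exp, eps]
  push_cast
  congr 1
  ring

lemma isPrimitiveRoot_epsCircle {m : ℕ} (hm : m ≠ 0) : IsPrimitiveRoot (epsCircle m) m :=
  IsPrimitiveRoot.of_map_of_injective (f := Circle.coeHom)
    (by rw [show Circle.coeHom (epsCircle m) = eps m from coe_epsCircle m]
        exact Complex.isPrimitiveRoot_exp m hm)
    Circle.coe_injective

lemma FM_eq_coe_diagSU (m : ℕ) (k : ℤ) :
    FM m k = (diagSU (epsCircle m) 1 k : Matrix (Fin 3) (Fin 3) ℂ) := by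
  rw [coe_diagSU, FM, show -1 - k = -k - 1 by ring]
  simp [coe_epsCircle]

lemma GM_eq_coe_diagSU (m r : ℕ) :
    GM m r = (diagSU (epsCircle m) 0 (-r) : Matrix (Fin 3) (Fin 3) ℂ) := by
  rw [coe_diagSU, GM, show -0 - -(r : ℤ) = r by ring]
  simp [coe_epsCircle]

theorem statement5_general (m n : ℕ) (hm : 0 < m) (hnm : n ∣ m) (k : ℤ)
    (E B F G : SU3)
    (hE : (E : Matrix (Fin 3) (Fin 3) ℂ) = EM)
    (hB : (B : Matrix (Fin 3) (Fin 3) ℂ) = BM)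
    (hF : (F : Matrix (Fin 3) (Fin 3) ℂ) = FM m k)
    (hG : (G : Matrix (Fin 3) (Fin 3) ℂ) = GM m (m / n)) :
    ((fun a => E * a * E⁻¹) '' (Subgroup.closure ({F, G} : Set SU3) : Set SU3)
        = (Subgroup.closure ({F, G} : Set SU3) : Set SU3)
      ↔ ((m / n : ℕ) : ℤ) ∣ 1 + k + k ^ 2) ∧
    ((fun a => B * a * B⁻¹) '' (Subgroup.closure ({F, G} : Set SU3) : Set SU3)
        = (Subgroup.closure ({F, G} : Set SU3) : Set SU3)
      ↔ ((m / n : ℕ) : ℤ) ∣ 1 + 2 * k) := by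
  have hζ := isPrimitiveRoot_epsCircle hm.ne'
  have hr : ((m / n : ℕ) : ℤ) ∣ m := Int.natCast_dvd_natCast.2 (Nat.div_dvd_of_dvd hnm)
  obtain rfl : F = diagSU (epsCircle m) 1 k :=
    Subtype.ext (hF.trans (FM_eq_coe_diagSU m k))
  obtain rfl : G = diagSU (epsCircle m) 0 (-((m / n : ℕ) : ℤ)) :=
    Subtype.ext (hG.trans (GM_eq_coe_diagSU m (m / n)))
  constructor
  · rw [conj_image_closure_diagSU_eq_iff (isOfFinOrder_of_coe_eq_EM hE) hζ hr 0 1 (-1) (-1)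
      fun a b => by rw [conj_diagSU_of_coe_eq_EM hE]; congr 1 <;> ring,
      ← dvd_neg, show -(-1 + -1 * k - k * (0 + 1 * k)) = 1 + k + k ^ 2 by ring]
  · rw [conj_image_closure_diagSU_eq_iff (isOfFinOrder_of_coe_eq_BM hB) hζ hr 1 0 (-1) (-1)
      fun a b => by rw [conj_diagSU_of_coe_eq_BM hB]; congr 1 <;> ring,
      ← dvd_neg, show -(-1 + -1 * k - k * (1 + 0 * k)) = 1 + 2 * k by ring]

theorem statement5 (m n : ℕ) (hm : 0 < m) (hn : 0 < n) (hnm : n ∣ m) (k : ℤ)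
    (E B F G : SU3)
    (hE : (E : Matrix (Fin 3) (Fin 3) ℂ) = EM)
    (hB : (B : Matrix (Fin 3) (Fin 3) ℂ) = BM)
    (hF : (F : Matrix (Fin 3) (Fin 3) ℂ) = FM m k)
    (hG : (G : Matrix (Fin 3) (Fin 3) ℂ) = GM m (m / n)) :
    ((fun a => E * a * E⁻¹) '' (Subgroup.closure ({F, G} : Set SU3) : Set SU3)
        = (Subgroup.closure ({F, G} : Set SU3) : Set SU3)
      ↔ ((m / n : ℕ) : ℤ) ∣ 1 + k + k ^ 2) ∧
    ((fun a => B * a * B⁻¹) '' (Subgroup.closure ({F, G} : Set SU3) : Set SU3)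
        = (Subgroup.closure ({F, G} : Set SU3) : Set SU3)
      ↔ ((m / n : ℕ) : ℤ) ∣ 1 + 2 * k) :=
  statement5_general m n hm hnm k E B F G hE hB hF hG
end
end

section
/- Let n be a positive integer not divisible by 3. Then D_{3n,n}^{(1)} is isomorphic to ℤ_3 × D_{n,n}^{(0)}. -/
open Matrix Complex

noncomputable section

/-! Put `ε = exp(2πi/3n)`. As vectors of exponents of `ε`, one checks `F₀ = F₁³G₁` and
`G₀ = G₁`, so `D_{n,n}^{(0)} ≤ D_{3n,n}^{(1)}`, while `W = F₁ⁿG₁ⁿ = ω • 1` with `ω = exp(2πi/3)`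
is central of order 3. As `3 ∤ n` there are `c, j` with `3c + 1 = nj`, and then
`F₁ F₀ᶜ = Wʲ G₀ᶜ`, so `D_{3n,n}^{(1)}` is generated by `W` and `D_{n,n}^{(0)}`. Every element of
`D_{n,n}^{(0)}` is a monomial matrix whose entries are `2n`-th roots of unity, and `ωᵏ` is such a
root only when `3 ∣ k`; hence `⟨W⟩` meets `D_{n,n}^{(0)}` trivially and the product is direct. -/

namespace Subgroup

variable {G : Type*} [Group G]

def mulEquivProdOfDisjoint {K H L : Subgroup G} (hcomm : ∀ k ∈ K, ∀ h ∈ H, Commute k h)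
    (hdisj : Disjoint K H) (hsup : K ⊔ H = L) : L ≃* K × H :=
  have comm : ∀ (k : K) (h : H), Commute (K.subtype k) (H.subtype h) :=
    fun k h => hcomm k k.2 h h.2
  have hinj : Function.Injective (K.subtype.noncommCoprod H.subtype comm) :=
    (MonoidHom.noncommCoprod_injective _ _ _).2
      ⟨K.subtype_injective, H.subtype_injective, by simpa [range_subtype] using hdisj⟩
  have hrange : (K.subtype.noncommCoprod H.subtype comm).range = L := by
    rw [MonoidHom.noncommCoprod_range, range_subtype, range_subtype, hsup]
  ((MonoidHom.ofInjective hinj).trans (MulEquiv.subgroupCongr hrange)).symm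

end Subgroup

namespace Matrix

section RootMonomial

variable {ι R : Type*} [Fintype ι] [DecidableEq ι] [CommSemiring R]

def rootMonomial (N : ℕ) : Submonoid (Matrix ι ι R) where
  carrier := {A | ∃ σ : Equiv.Perm ι, (∀ i, A i (σ i) ^ N = 1) ∧ ∀ i j, j ≠ σ i → A i j = 0}
  one_mem' := ⟨1, fun i => by rw [Equiv.Perm.one_apply, one_apply_eq, one_pow],
    fun i j h => one_apply_ne' h⟩
  mul_mem' := by
    rintro A B ⟨σ, hσ, hσ₀⟩ ⟨τ, hτ, hτ₀⟩
    have hAB (i j : ι) : (A * B) i j = A i (σ i) * B (σ i) j := by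
      rw [mul_apply]
      exact Fintype.sum_eq_single (σ i) fun k hk => by rw [hσ₀ i k hk, zero_mul]
    refine ⟨σ.trans τ, fun i => ?_, fun i j hj => ?_⟩
    · rw [hAB, mul_pow, hσ, Equiv.trans_apply, hτ, one_mul]
    · rw [hAB, hτ₀ _ _ hj, mul_zero]

variable {N : ℕ}

theorem rootMonomial_mono {M : ℕ} (h : N ∣ M) :
    rootMonomial N ≤ (rootMonomial M : Submonoid (Matrix ι ι R)) := by
  obtain ⟨c, rfl⟩ := h
  rintro A ⟨σ, hσ, hσ₀⟩
  exact ⟨σ, fun i => by rw [pow_mul, hσ, one_pow], hσ₀⟩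

theorem conjTranspose_mem_rootMonomial [StarRing R] {A : Matrix ι ι R}
    (hA : A ∈ rootMonomial N) : Aᴴ ∈ rootMonomial N := by
  obtain ⟨σ, hσ, hσ₀⟩ := hA
  refine ⟨σ⁻¹, fun i => ?_, fun i j hj => ?_⟩
  · simpa [← star_pow] using congrArg star (hσ (σ⁻¹ i))
  · rw [conjTranspose_apply, hσ₀ j i (by rintro rfl; simp at hj), star_zero]

theorem diagonal_mem_rootMonomial {d : ι → R} (hd : ∀ i, d i ^ N = 1) :
    diagonal d ∈ rootMonomial N :=
  ⟨1, fun i => by simpa using hd i, fun i j h => diagonal_apply_ne _ (Ne.symm h)⟩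

theorem pow_eq_one_of_smul_one_mem_rootMonomial [Nonempty ι] {c : R} (hc : c ≠ 0)
    (h : c • (1 : Matrix ι ι R) ∈ rootMonomial N) : c ^ N = 1 := by
  obtain ⟨σ, hσ, hσ₀⟩ := h
  obtain ⟨i⟩ := ‹Nonempty ι›
  by_cases hi : σ i = i
  · simpa [hi] using hσ i
  · simpa [hc] using hσ₀ i i (Ne.symm hi)

end RootMonomial

section DiagPow

variable {ι K : Type*} [DecidableEq ι] [Field K]

def diagPow (x : K) (v : ι → ℤ) : Matrix ι ι K := diagonal fun i => x ^ v i

variable {x : K} {v w : ι → ℤ}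

theorem diagPow_add [Fintype ι] (hx : x ≠ 0) :
    diagPow x (v + w) = diagPow x v * diagPow x w := by
  simp only [diagPow, diagonal_mul_diagonal, Pi.add_apply, zpow_add₀ hx]

theorem diagPow_nsmul [Fintype ι] (k : ℕ) : diagPow x (k • v) = diagPow x v ^ k := by
  simp only [diagPow, diagonal_pow, Pi.smul_apply, nsmul_eq_mul, mul_comm,
    _root_.zpow_mul, zpow_natCast]
  rfl

theorem diagPow_zpow (t : ℤ) : diagPow (x ^ t) v = diagPow x (t • v) := by
  simp only [diagPow, Pi.smul_apply, smul_eq_mul, _root_.zpow_mul]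

theorem diagPow_const (t : ℤ) : diagPow x (fun _ => t) = x ^ t • (1 : Matrix ι ι K) := by
  rw [diagPow, smul_one_eq_diagonal]

theorem diagPow_add_smul_of_pow_eq_one {m : ℕ} (hx : x ^ m = 1) (q : ι → ℤ) :
    diagPow x (v + (m : ℤ) • q) = diagPow x v := by
  rcases eq_or_ne m 0 with rfl | hm
  · simp
  have hx0 : x ≠ 0 := ne_zero_pow hm (hx ▸ one_ne_zero)
  simp only [diagPow, Pi.add_apply, Pi.smul_apply, smul_eq_mul, zpow_add₀ hx0, _root_.zpow_mul,
    zpow_natCast, hx, _root_.one_zpow, mul_one]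

theorem diagPow_mem_rootMonomial [Fintype ι] {N : ℕ} (hx : x ^ N = 1) (v : ι → ℤ) :
    diagPow x v ∈ rootMonomial N :=
  diagonal_mem_rootMonomial fun i => by
    rw [← zpow_natCast, ← _root_.zpow_mul, mul_comm, _root_.zpow_mul, zpow_natCast, hx,
      _root_.one_zpow]

end DiagPow

end Matrix

section Generators

theorem eps_ne_zero (m : ℕ) : eps m ≠ 0 := Complex.exp_ne_zero _

theorem isPrimitiveRoot_eps {m : ℕ} (hm : m ≠ 0) : IsPrimitiveRoot (eps m) m :=
  Complex.isPrimitiveRoot_exp m hm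

theorem eps_pow_self (m : ℕ) : eps m ^ m = 1 := by
  rcases eq_or_ne m 0 with rfl | hm
  · exact pow_zero _
  · exact (isPrimitiveRoot_eps hm).pow_eq_one

theorem eps_eq_eps_mul_zpow {a : ℕ} (ha : a ≠ 0) (m : ℕ) : eps m = eps (a * m) ^ (a : ℤ) := by
  rw [zpow_natCast, eps, eps, ← Complex.exp_nat_mul]
  congr 1
  push_cast
  field_simp

theorem FM_eq_diagPow (m : ℕ) (k : ℤ) : FM m k = diagPow (eps m) ![1, k, -k - 1] := by
  rw [FM, diagPow]
  congr 1
  ext i; fin_cases i <;> simp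

theorem GM_eq_diagPow (m r : ℕ) : GM m r = diagPow (eps m) ![0, -(r : ℤ), r] := by
  rw [GM, diagPow]
  congr 1
  ext i; fin_cases i <;> simp

theorem EM_mem_rootMonomial (N : ℕ) : EM ∈ rootMonomial N := by
  refine ⟨finRotate 3, fun i => ?_, fun i j hj => ?_⟩ <;> fin_cases i <;> try fin_cases j
  all_goals simp_all [EM]

theorem BM_mem_rootMonomial : BM ∈ rootMonomial 2 := by
  refine ⟨Equiv.swap 1 2, fun i => ?_, fun i j hj => ?_⟩ <;> fin_cases i <;> try fin_cases j
  all_goals simp_all [BM, Equiv.swap_apply_of_ne_of_ne]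

theorem FM_mem_rootMonomial (m : ℕ) (k : ℤ) : FM m k ∈ rootMonomial m :=
  FM_eq_diagPow m k ▸ diagPow_mem_rootMonomial (eps_pow_self m) _

theorem GM_mem_rootMonomial (m r : ℕ) : GM m r ∈ rootMonomial m :=
  GM_eq_diagPow m r ▸ diagPow_mem_rootMonomial (eps_pow_self m) _

variable (n : ℕ)

theorem FM_pow_three_mul_GM : FM (3 * n) 1 ^ 3 * GM (3 * n) 3 = FM n 0 := by
  rw [FM_eq_diagPow, GM_eq_diagPow, FM_eq_diagPow, eps_eq_eps_mul_zpow three_ne_zero n,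
    diagPow_zpow, ← diagPow_nsmul, ← diagPow_add (eps_ne_zero _)]
  congr 1
  ext i; fin_cases i <;> simp

theorem GM_three_mul : GM (3 * n) 3 = GM n 1 := by
  rw [GM_eq_diagPow, GM_eq_diagPow, eps_eq_eps_mul_zpow three_ne_zero n, diagPow_zpow]
  congr 1
  ext i; fin_cases i <;> simp

variable {n}

theorem eps_three_smul_one_eq_diagPow (hn : n ≠ 0) :
    eps 3 • (1 : Matrix (Fin 3) (Fin 3) ℂ) = diagPow (eps (3 * n)) fun _ => (n : ℤ) := by
  rw [diagPow_const, mul_comm 3 n, ← eps_eq_eps_mul_zpow hn]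

theorem FM_pow_mul_GM_pow (hn : n ≠ 0) :
    FM (3 * n) 1 ^ n * GM (3 * n) 3 ^ n = eps 3 • 1 := by
  have hε := (isPrimitiveRoot_eps (mul_ne_zero three_ne_zero hn)).pow_eq_one
  rw [FM_eq_diagPow, GM_eq_diagPow, ← diagPow_nsmul, ← diagPow_nsmul,
    ← diagPow_add (eps_ne_zero _), eps_three_smul_one_eq_diagPow hn,
    ← diagPow_add_smul_of_pow_eq_one hε ![0, 1, 0]]
  congr 1
  ext i; fin_cases i <;> simp <;> ring

theorem FM_mul_FM_pow {c j : ℕ} (hcj : 3 * c + 1 = n * j) :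
    FM (3 * n) 1 * FM n 0 ^ c = (eps 3 • 1) ^ j * GM n 1 ^ c := by
  have hn : n ≠ 0 := by rintro rfl; omega
  have hε := (isPrimitiveRoot_eps (mul_ne_zero three_ne_zero hn)).pow_eq_one
  have hcj' : 3 * (c : ℤ) + 1 = n * j := by exact_mod_cast hcj
  rw [FM_eq_diagPow, FM_eq_diagPow, GM_eq_diagPow, eps_three_smul_one_eq_diagPow hn,
    eps_eq_eps_mul_zpow three_ne_zero n, diagPow_zpow, diagPow_zpow, ← diagPow_nsmul,
    ← diagPow_nsmul, ← diagPow_nsmul, ← diagPow_add (eps_ne_zero _),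
    ← diagPow_add (eps_ne_zero _), ← diagPow_add_smul_of_pow_eq_one hε ![0, 0, (j : ℤ)]]
  congr 1
  ext i; fin_cases i <;> simp <;> linarith

end Generators

namespace SU3

local notation "M₃" => Matrix (Fin 3) (Fin 3) ℂ

@[simp] theorem coe_mul (A B : SU3) : ((A * B : SU3) : M₃) = A * B := rfl

@[simp] theorem coe_pow (A : SU3) (k : ℕ) : ((A ^ k : SU3) : M₃) = (A : M₃) ^ k :=
  SubmonoidClass.coe_pow A k

def rootMonomialSubgroup (N : ℕ) : Subgroup SU3 where
  carrier := {A | (A : M₃) ∈ rootMonomial N}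
  mul_mem' := (rootMonomial N).mul_mem
  one_mem' := (rootMonomial N).one_mem
  inv_mem' := conjTranspose_mem_rootMonomial

theorem mem_rootMonomialSubgroup {N : ℕ} {A : SU3} :
    A ∈ rootMonomialSubgroup N ↔ (A : M₃) ∈ rootMonomial N := Iff.rfl

theorem closure_le_rootMonomialSubgroup {n : ℕ} {E B F G : SU3} (hE : (E : M₃) = EM)
    (hB : (B : M₃) = BM) (hF : (F : M₃) = FM n 0) (hG : (G : M₃) = GM n 1) :
    Subgroup.closure {E, B, F, G} ≤ rootMonomialSubgroup (2 * n) := by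
  simp only [Subgroup.closure_le, Set.insert_subset_iff, Set.singleton_subset_iff,
    SetLike.mem_coe, mem_rootMonomialSubgroup]
  exact ⟨hE ▸ EM_mem_rootMonomial _,
    rootMonomial_mono (dvd_mul_right 2 n) (hB ▸ BM_mem_rootMonomial),
    rootMonomial_mono (dvd_mul_left n 2) (hF ▸ FM_mem_rootMonomial n 0),
    rootMonomial_mono (dvd_mul_left n 2) (hG ▸ GM_mem_rootMonomial n 1)⟩

section Central

variable {W : SU3} (hW : (W : M₃) = eps 3 • 1)
include hW

theorem commute_of_coe_eq_smul_one (A : SU3) : Commute W A :=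
  Subtype.ext <| by rw [coe_mul, coe_mul, hW, smul_one_mul, mul_smul_one]

theorem coe_pow_of_coe_eq_smul_one (k : ℕ) : ((W ^ k : SU3) : M₃) = eps 3 ^ k • 1 := by
  rw [coe_pow, hW, smul_pow, one_pow]

theorem orderOf_of_coe_eq_smul_one : orderOf W = 3 := by
  have hε := isPrimitiveRoot_eps three_ne_zero
  refine orderOf_eq_prime (Subtype.ext ?_) fun h => hε.ne_one (by norm_num) ?_
  · rw [coe_pow_of_coe_eq_smul_one hW, hε.pow_eq_one, one_smul]; rfl
  · simpa using congrArg (· 0 0) (hW.symm.trans (congrArg Subtype.val h))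

theorem disjoint_zpowers_rootMonomialSubgroup {N : ℕ} (hN : Nat.Coprime 3 N) :
    Disjoint (Subgroup.zpowers W) (rootMonomialSubgroup N) := by
  have hε := isPrimitiveRoot_eps three_ne_zero
  have hWfin : IsOfFinOrder W :=
    orderOf_pos_iff.1 (by rw [orderOf_of_coe_eq_smul_one hW]; norm_num)
  rw [Subgroup.disjoint_def]
  intro x hxW hxN
  obtain ⟨k, rfl⟩ := hWfin.mem_powers_iff_mem_zpowers.2 hxW
  rw [mem_rootMonomialSubgroup, coe_pow_of_coe_eq_smul_one hW] at hxN
  have hk := pow_eq_one_of_smul_one_mem_rootMonomial (pow_ne_zero k (eps_ne_zero 3)) hxN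
  rw [← pow_mul, hε.pow_eq_one_iff_dvd] at hk
  rw [← orderOf_dvd_iff_pow_eq_one, orderOf_of_coe_eq_smul_one hW]
  exact hN.dvd_of_dvd_mul_right hk

end Central

section Generators

variable {n : ℕ} {E B F₁ G₁ F₀ G₀ : SU3}
  (hF₁ : (F₁ : M₃) = FM (3 * n) 1) (hG₁ : (G₁ : M₃) = GM (3 * n) 3)
  (hF₀ : (F₀ : M₃) = FM n 0) (hG₀ : (G₀ : M₃) = GM n 1)
include hF₁ hG₁

theorem coe_pow_mul_pow_eq_smul_one (hn : n ≠ 0) :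
    ((F₁ ^ n * G₁ ^ n : SU3) : M₃) = eps 3 • 1 := by
  rw [coe_mul, coe_pow, coe_pow, hF₁, hG₁, FM_pow_mul_GM_pow hn]

include hF₀ hG₀

theorem closure_le_closure_of_coe_eq :
    Subgroup.closure {E, B, F₀, G₀} ≤ Subgroup.closure {E, B, F₁, G₁} := by
  have hF : F₀ = F₁ ^ 3 * G₁ := Subtype.ext <| by
    rw [coe_mul, coe_pow, hF₁, hG₁, hF₀, FM_pow_three_mul_GM]
  have hG : G₀ = G₁ := Subtype.ext <| by rw [hG₁, hG₀, GM_three_mul]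
  have mem : ∀ y ∈ ({E, B, F₁, G₁} : Set SU3), y ∈ Subgroup.closure {E, B, F₁, G₁} :=
    fun y hy => Subgroup.subset_closure hy
  simp only [Subgroup.closure_le, Set.insert_subset_iff, Set.singleton_subset_iff,
    SetLike.mem_coe, hF, hG]
  exact ⟨mem E (by simp), mem B (by simp),
    mul_mem (pow_mem (mem F₁ (by simp)) 3) (mem G₁ (by simp)), mem G₁ (by simp)⟩

theorem zpowers_sup_closure_eq (h3 : ¬ 3 ∣ n) :
    Subgroup.zpowers (F₁ ^ n * G₁ ^ n) ⊔ Subgroup.closure {E, B, F₀, G₀} =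
      Subgroup.closure {E, B, F₁, G₁} := by
  obtain ⟨c, j, hcj⟩ : ∃ c j : ℕ, 3 * c + 1 = n * j := by
    rcases (by omega : n % 3 = 1 ∨ n % 3 = 2) with h | h
    exacts [⟨n / 3, 1, by omega⟩, ⟨2 * n / 3, 2, by omega⟩]
  have hn : n ≠ 0 := by rintro rfl; omega
  set W := F₁ ^ n * G₁ ^ n
  have hF : F₁ = W ^ j * G₀ ^ c * (F₀ ^ c)⁻¹ := eq_mul_inv_of_mul_eq <| Subtype.ext <| by
    rw [coe_mul, coe_mul, coe_pow, coe_pow, coe_pow, coe_pow_mul_pow_eq_smul_one hF₁ hG₁ hn,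
      hF₁, hF₀, hG₀, FM_mul_FM_pow hcj]
  have hG : G₁ = G₀ := Subtype.ext <| by rw [hG₁, hG₀, GM_three_mul]
  have mem₁ : ∀ y ∈ ({E, B, F₁, G₁} : Set SU3), y ∈ Subgroup.closure {E, B, F₁, G₁} :=
    fun y hy => Subgroup.subset_closure hy
  have mem₀ : ∀ y ∈ ({E, B, F₀, G₀} : Set SU3),
      y ∈ Subgroup.zpowers W ⊔ Subgroup.closure {E, B, F₀, G₀} :=
    fun y hy => Subgroup.mem_sup_right (Subgroup.subset_closure hy)
  have hWmem : W ∈ Subgroup.zpowers W ⊔ Subgroup.closure {E, B, F₀, G₀} :=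
    Subgroup.mem_sup_left (Subgroup.mem_zpowers W)
  refine le_antisymm (sup_le ?_ (closure_le_closure_of_coe_eq hF₁ hG₁ hF₀ hG₀)) ?_
  · exact Subgroup.zpowers_le.2
      (mul_mem (pow_mem (mem₁ F₁ (by simp)) n) (pow_mem (mem₁ G₁ (by simp)) n))
  simp only [Subgroup.closure_le, Set.insert_subset_iff, Set.singleton_subset_iff,
    SetLike.mem_coe]
  refine ⟨mem₀ E (by simp), mem₀ B (by simp), ?_, hG ▸ mem₀ G₀ (by simp)⟩
  rw [hF]
  exact mul_mem (mul_mem (pow_mem hWmem j) (pow_mem (mem₀ G₀ (by simp)) c))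
    (inv_mem (pow_mem (mem₀ F₀ (by simp)) c))

end Generators

end SU3

theorem statement18_general (n : ℕ) (h3 : ¬ 3 ∣ n)
    (E B F₁ G₁ F₀ G₀ : SU3)
    (hE : (E : Matrix (Fin 3) (Fin 3) ℂ) = EM)
    (hB : (B : Matrix (Fin 3) (Fin 3) ℂ) = BM)
    (hF₁ : (F₁ : Matrix (Fin 3) (Fin 3) ℂ) = FM (3 * n) 1)
    (hG₁ : (G₁ : Matrix (Fin 3) (Fin 3) ℂ) = GM (3 * n) 3)
    (hF₀ : (F₀ : Matrix (Fin 3) (Fin 3) ℂ) = FM n 0)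
    (hG₀ : (G₀ : Matrix (Fin 3) (Fin 3) ℂ) = GM n 1) :
    Nonempty ((Subgroup.closure ({E, B, F₁, G₁} : Set SU3)) ≃*
      Multiplicative (ZMod 3) × (Subgroup.closure ({E, B, F₀, G₀} : Set SU3))) := by
  have hn : n ≠ 0 := by rintro rfl; exact h3 (dvd_zero 3)
  have hW := SU3.coe_pow_mul_pow_eq_smul_one hF₁ hG₁ hn
  have hcomm : ∀ w ∈ Subgroup.zpowers (F₁ ^ n * G₁ ^ n), ∀ h ∈ Subgroup.closure {E, B, F₀, G₀},
      Commute w h := by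
    rintro _ ⟨i, rfl⟩ h -
    exact (SU3.commute_of_coe_eq_smul_one hW h).zpow_left i
  have hcoprime : Nat.Coprime 3 (2 * n) :=
    Nat.Coprime.mul_right (by norm_num) ((Nat.Prime.coprime_iff_not_dvd Nat.prime_three).2 h3)
  have hdisj := (SU3.disjoint_zpowers_rootMonomialSubgroup hW hcoprime).mono_right
    (SU3.closure_le_rootMonomialSubgroup hE hB hF₀ hG₀)
  have hcard : Nat.card (Subgroup.zpowers (F₁ ^ n * G₁ ^ n)) =
      Nat.card (Multiplicative (ZMod 3)) := by
    rw [Nat.card_zpowers, SU3.orderOf_of_coe_eq_smul_one hW]; simp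
  exact ⟨(Subgroup.mulEquivProdOfDisjoint hcomm hdisj
    (SU3.zpowers_sup_closure_eq hF₁ hG₁ hF₀ hG₀ h3)).trans
      ((mulEquivOfCyclicCardEq hcard).prodCongr (MulEquiv.refl _))⟩

theorem statement18 (n : ℕ) (hn : 0 < n) (h3 : ¬ 3 ∣ n)
    (E B F₁ G₁ F₀ G₀ : SU3)
    (hE : (E : Matrix (Fin 3) (Fin 3) ℂ) = EM)
    (hB : (B : Matrix (Fin 3) (Fin 3) ℂ) = BM)
    (hF₁ : (F₁ : Matrix (Fin 3) (Fin 3) ℂ) = FM (3 * n) 1)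
    (hG₁ : (G₁ : Matrix (Fin 3) (Fin 3) ℂ) = GM (3 * n) 3)
    (hF₀ : (F₀ : Matrix (Fin 3) (Fin 3) ℂ) = FM n 0)
    (hG₀ : (G₀ : Matrix (Fin 3) (Fin 3) ℂ) = GM n 1) :
    Nonempty ((Subgroup.closure ({E, B, F₁, G₁} : Set SU3)) ≃*
      Multiplicative (ZMod 3) × (Subgroup.closure ({E, B, F₀, G₀} : Set SU3))) :=
  statement18_general n h3 E B F₁ G₁ F₀ G₀ hE hB hF₁ hG₁ hF₀ hG₀
end
end
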